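/- Let μ_1,…,μ_m be nonzero complex numbers with |μ_i| ≠ 1 for every i and |μ_i| > 1 for at least one i. For each positive integer n let a_{1,n},…,a_{m,n} be defined by ∏_{j=1}^m (z − μ_j^n) = z^m + a_{1,n} z^{m−1} + ⋯ + a_{m,n}, let F̄_n be the m×m nonnegative matrix with first column (|a_{1,n}|,…,|a_{m,n}|)ᵀ, superdiagonal entries 1 and all other entries 0, and for r ∈ ℝ let D(r) = diag(2^{−nr}, 1, …, 1). Define R^f_n = inf{ r ∈ ℝ : λ(F̄_n D(r)) < 1 }. Then lim_{n→∞} R^f_n = Σ_{i : |μ_i| > 1} log₂ |μ_i|. -/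

import Mathlib

open Matrix

/-- `acoef m μ n i` is the coefficient `a_{i,n}` (for `1 ≤ i ≤ m`) defined by
`∏_{j=1}^m (z − μ_j^n) = z^m + a_{1,n} z^{m-1} + ⋯ + a_{m,n}`;
i.e. the coefficient of `z^{m-i}` in the monic polynomial with roots `μ_1^n, …, μ_m^n`. -/
noncomputable def acoef (m : ℕ) (μ : Fin m → ℂ) (n i : ℕ) : ℂ :=
  (∏ j : Fin m, (Polynomial.X - Polynomial.C (μ j ^ n))).coeff (m - i)

/-- The nonnegative matrix `F̄_n`: first column `(|a_{1,n}|, …, |a_{m,n}|)ᵀ`,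
ones on the superdiagonal, zeros elsewhere. -/
noncomputable def absCompanion (m : ℕ) (μ : Fin m → ℂ) (n : ℕ) :
    Matrix (Fin m) (Fin m) ℝ :=
  Matrix.of fun i j =>
    (if (j : ℕ) = 0 then ‖acoef m μ n ((i : ℕ) + 1)‖ else 0)
      + (if (j : ℕ) = (i : ℕ) + 1 then 1 else 0)

/-- The diagonal matrix `D(r) = diag(2^{-nr}, 1, …, 1)`. -/
noncomputable def rateDiag (m n : ℕ) (r : ℝ) : Matrix (Fin m) (Fin m) ℝ :=
  Matrix.diagonal fun i => if (i : ℕ) = 0 then (2 : ℝ) ^ (-((n : ℝ) * r)) else 1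

/-- The spectral radius of a real square matrix: the maximum modulus of its complex
eigenvalues, formalized as the spectral radius (over `ℂ`) of its complexification. -/
noncomputable def specRad {m : ℕ} (A : Matrix (Fin m) (Fin m) ℝ) : ENNReal :=
  spectralRadius ℂ (A.map (Complex.ofReal ·))

/-!
`F̄_n D(r)` is a companion matrix whose first column is `2^{-nr} (|a_{1,n}|, …, |a_{m,n}|)`. For a
companion matrix with nonnegative first column `b`, every eigenvalue `z` satisfies
`|z|^m ≤ ∑ b_j |z|^{m-1-j}`, so the spectral radius is `< 1` as soon as `∑ b_j < 1`; conversely, if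
`∑ b_j ≥ 1` the intermediate value theorem gives a real eigenvalue `≥ 1`. Hence
`R^f_n = log₂ (∑_i |a_{i,n}|) / n`.

By Vieta, `±a_{i,n}` is the sum over `i`-subsets `t` of `∏_{l ∈ t} μ_l^n`, and each
`∏_{l ∈ t} |μ_l|` is at most `P = ∏_{|μ_l| > 1} |μ_l|`, with equality among the subsets of size
`k = #{l : |μ_l| > 1}` only for the unstable set itself. So `P^n / 2 ≤ ∑_i |a_{i,n}| ≤ C P^n` for
large `n`, and `R^f_n → log₂ P`.
-/

open Finset Filter Topology

theorem Matrix.mem_spectrum_iff_exists_mulVec_eq_smul {n K : Type*} [Fintype n] [DecidableEq n]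
    [Field K] (A : Matrix n n K) (z : K) :
    z ∈ spectrum K A ↔ ∃ v ≠ 0, A *ᵥ v = z • v := by
  rw [← Matrix.spectrum_toLin', ← Module.End.hasEigenvalue_iff_mem_spectrum,
    Module.End.hasEigenvalue_iff, Submodule.ne_bot_iff]
  simp only [Module.End.mem_eigenspace_iff, Matrix.toLin'_apply]
  tauto

section Companion

variable {R S : Type*} [CommRing R] [CommRing S] {m : ℕ}

/-- The companion matrix of `X ^ m - ∑ j < m, b j * X ^ (m - 1 - j)` with the coefficients in the
first column; only `b 0, …, b (m - 1)` enter. -/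
def colCompanion (m : ℕ) (b : ℕ → R) : Matrix (Fin m) (Fin m) R :=
  Matrix.of fun i j => (if (j : ℕ) = 0 then b i else 0) + (if (j : ℕ) = (i : ℕ) + 1 then 1 else 0)

theorem colCompanion_map (f : R →+* S) (b : ℕ → R) :
    (colCompanion m b).map f = colCompanion m (f ∘ b) := by
  ext i j
  simp [colCompanion, apply_ite f]

theorem colCompanion_mul_diagonal (b : ℕ → R) (t : R) :
    colCompanion m b * diagonal (fun i : Fin m => if (i : ℕ) = 0 then t else 1) =
      colCompanion m (fun i => b i * t) := by
  ext i j
  rw [mul_diagonal]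
  by_cases hj : (j : ℕ) = 0
  · simp [colCompanion, hj]
  · simp [colCompanion, hj]

theorem colCompanion_mulVec_apply (b : ℕ → R) {w : ℕ → R} (hw : w m = 0) (i : Fin m) :
    (colCompanion m b *ᵥ fun j : Fin m => w j) i = b i * w 0 + w (i + 1) := by
  have hm : 0 < m := i.pos
  simp only [mulVec, dotProduct, colCompanion, of_apply, add_mul, ite_mul, one_mul, zero_mul,
    sum_add_distrib]
  congr 1
  · rw [sum_eq_single ⟨0, hm⟩ (fun j _ hj => if_neg (fun h => hj (Fin.ext h))) (by simp)]
    simp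
  · by_cases hi : (i : ℕ) + 1 < m
    · rw [sum_eq_single ⟨i + 1, hi⟩ (fun j _ hj => if_neg (fun h => hj (Fin.ext h))) (by simp)]
      simp
    · rw [show (i : ℕ) + 1 = m by omega, hw]
      exact sum_eq_zero fun j _ => if_neg (by omega)

/-- The `k`-th entry of the eigenvector of `colCompanion m b` for the eigenvalue `z` normalised to
first entry `1`; for `k = m` it is the characteristic polynomial evaluated at `z`. -/
def companionEval (b : ℕ → R) (z : R) (k : ℕ) : R :=
  z ^ k - ∑ j ∈ range k, b j * z ^ (k - 1 - j)

theorem companionEval_zero (b : ℕ → R) (z : R) : companionEval b z 0 = 1 := by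
  simp [companionEval]

theorem companionEval_succ (b : ℕ → R) (z : R) (k : ℕ) :
    companionEval b z (k + 1) = z * companionEval b z k - b k := by
  have hsum : ∑ j ∈ range k, b j * z ^ (k + 1 - 1 - j) =
      z * ∑ j ∈ range k, b j * z ^ (k - 1 - j) := by
    rw [mul_sum]
    refine sum_congr rfl fun j hj => ?_
    rw [show k + 1 - 1 - j = k - 1 - j + 1 by have := mem_range.mp hj; omega, pow_succ']
    ring
  rw [companionEval, companionEval, sum_range_succ, hsum, Nat.add_sub_cancel, Nat.sub_self]
  ring

theorem map_companionEval (f : R →+* S) (b : ℕ → R) (z : R) (k : ℕ) :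
    f (companionEval b z k) = companionEval (f ∘ b) (f z) k := by
  simp [companionEval, map_sum]

theorem mem_spectrum_colCompanion_iff {K : Type*} [Field K] (b : ℕ → K) (z : K) :
    z ∈ spectrum K (colCompanion m b) ↔ companionEval b z m = 0 := by
  rw [mem_spectrum_iff_exists_mulVec_eq_smul]
  constructor
  · rintro ⟨v, hv, hvz⟩
    set w : ℕ → K := fun k => if h : k < m then v ⟨k, h⟩ else 0
    have hwv : (fun j : Fin m => w j) = v := by simp [w]
    have hwm : w m = 0 := by simp [w]
    have hrow : ∀ k < m, w (k + 1) = z * w k - b k * w 0 := fun k hk => by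
      have := congrFun hvz ⟨k, hk⟩
      rw [← hwv, colCompanion_mulVec_apply b hwm] at this
      simp only [Pi.smul_apply, smul_eq_mul] at this
      rw [← this]; ring
    have hw : ∀ k ≤ m, w k = w 0 * companionEval b z k := by
      intro k hk
      induction k with
      | zero => rw [companionEval_zero, mul_one]
      | succ k ih => rw [hrow k hk, ih (by omega), companionEval_succ]; ring
    have hw0 : w 0 ≠ 0 := fun h0 => hv <| by
      rw [← hwv]; ext j; simp [hw j j.isLt.le, h0]
    simpa [hwm, hw0] using (hw m le_rfl).symm
  · intro hz
    refine ⟨fun j => companionEval b z j, fun hv => ?_, ?_⟩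
    · rcases Nat.eq_zero_or_pos m with rfl | hm
      · simp [companionEval_zero] at hz
      · simpa [companionEval_zero] using congrFun hv ⟨0, hm⟩
    · ext i
      rw [colCompanion_mulVec_apply b hz, companionEval_zero, companionEval_succ]
      simp only [Pi.smul_apply, smul_eq_mul]
      ring

end Companion

section Nonneg

variable {m : ℕ} {b : ℕ → ℝ}

theorem companionEval_norm_nonpos (hb : ∀ j, 0 ≤ b j) {z : ℂ}
    (hz : companionEval (Complex.ofRealHom ∘ b) z m = 0) : companionEval b ‖z‖ m ≤ 0 := by
  rw [companionEval, sub_eq_zero] at hz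
  rw [companionEval, sub_nonpos, ← norm_pow, hz]
  refine (norm_sum_le _ _).trans_eq (sum_congr rfl fun j _ => ?_)
  simp [abs_of_nonneg (hb j)]

theorem mul_sub_sum_le_companionEval (hb : ∀ j, 0 ≤ b j) (hm : 0 < m) {x : ℝ} (hx : 1 ≤ x) :
    x ^ (m - 1) * (x - ∑ j ∈ range m, b j) ≤ companionEval b x m := by
  have hterm : ∑ j ∈ range m, b j * x ^ (m - 1 - j) ≤ (∑ j ∈ range m, b j) * x ^ (m - 1) := by
    rw [sum_mul]
    exact sum_le_sum fun j _ =>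
      mul_le_mul_of_nonneg_left (pow_le_pow_right₀ hx (Nat.sub_le _ _)) (hb j)
  have hpow : x ^ m = x ^ (m - 1) * x := by rw [← pow_succ, Nat.sub_add_cancel hm]
  rw [companionEval, hpow]
  linarith

theorem pow_sub_sum_le_companionEval (hb : ∀ j, 0 ≤ b j) {x : ℝ} (hx0 : 0 ≤ x) (hx1 : x ≤ 1) :
    x ^ m - ∑ j ∈ range m, b j ≤ companionEval b x m := by
  rw [companionEval]
  gcongr with j
  exact mul_le_of_le_one_right (hb j) (pow_le_one₀ hx0 hx1)

theorem mem_spectrum_map_ofReal_colCompanion_iff (b : ℕ → ℝ) (z : ℂ) :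
    z ∈ spectrum ℂ ((colCompanion m b).map (Complex.ofReal ·)) ↔
      companionEval (Complex.ofRealHom ∘ b) z m = 0 := by
  rw [show (colCompanion m b).map (Complex.ofReal ·) = colCompanion m (Complex.ofRealHom ∘ b) from
    colCompanion_map Complex.ofRealHom b, mem_spectrum_colCompanion_iff]

theorem one_le_specRad_colCompanion (hm : 0 < m) (hb : ∀ j, 0 ≤ b j)
    (hs : 1 ≤ ∑ j ∈ range m, b j) : 1 ≤ specRad (colCompanion m b) := by
  set s := ∑ j ∈ range m, b j
  have hcont : Continuous fun x : ℝ => companionEval b x m := by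
    unfold companionEval; fun_prop
  have h1 : companionEval b 1 m ≤ 0 := by simp [companionEval, s, hs]
  have h2 : 0 ≤ companionEval b (s + 1) m := by
    have := mul_sub_sum_le_companionEval hb hm (x := s + 1) (by linarith)
    nlinarith [pow_pos (show (0 : ℝ) < s + 1 by linarith) (m - 1)]
  obtain ⟨x, ⟨hx1, -⟩, hx⟩ :=
    intermediate_value_Icc (by linarith : (1 : ℝ) ≤ s + 1) hcont.continuousOn ⟨h1, h2⟩
  have hmem : (x : ℂ) ∈ spectrum ℂ ((colCompanion m b).map (Complex.ofReal ·)) := by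
    rw [mem_spectrum_map_ofReal_colCompanion_iff, ← Complex.ofRealHom_eq_coe,
      ← map_companionEval, show companionEval b x m = 0 from hx, map_zero]
  refine le_trans ?_ (le_iSup₂ (f := fun k _ => (‖k‖₊ : ENNReal)) _ hmem)
  rw [ENNReal.one_le_coe_iff, ← NNReal.coe_le_coe, coe_nnnorm, Complex.norm_real,
    Real.norm_eq_abs, NNReal.coe_one]
  exact hx1.trans (le_abs_self x)

theorem specRad_colCompanion_lt_one (hm : 0 < m) (hb : ∀ j, 0 ≤ b j)
    (hs : ∑ j ∈ range m, b j < 1) : specRad (colCompanion m b) < 1 := by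
  set s := ∑ j ∈ range m, b j
  have hs0 : 0 ≤ s := sum_nonneg fun j _ => hb j
  have hbound : ∀ z ∈ spectrum ℂ ((colCompanion m b).map (Complex.ofReal ·)),
      ‖z‖ ≤ s ^ (m⁻¹ : ℝ) := by
    intro z hz
    have hz := companionEval_norm_nonpos hb ((mem_spectrum_map_ofReal_colCompanion_iff b z).1 hz)
    have hz1 : ‖z‖ ≤ 1 := by
      by_contra! hz1
      have := mul_sub_sum_le_companionEval hb hm hz1.le
      nlinarith [pow_pos (zero_lt_one.trans hz1) (m - 1)]
    have hzm : ‖z‖ ^ m ≤ s := by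
      linarith [pow_sub_sum_le_companionEval hb (norm_nonneg z) hz1 (m := m)]
    calc ‖z‖ = (‖z‖ ^ m) ^ (m⁻¹ : ℝ) := (Real.pow_rpow_inv_natCast (norm_nonneg z) hm.ne').symm
      _ ≤ s ^ (m⁻¹ : ℝ) := by gcongr
  refine lt_of_le_of_lt (iSup₂_le fun z hz => ?_)
    (ENNReal.ofReal_lt_one.mpr (Real.rpow_lt_one (z := (m⁻¹ : ℝ)) hs0 hs (by positivity)))
  rw [← ENNReal.ofReal_coe_nnreal, coe_nnnorm]
  exact ENNReal.ofReal_le_ofReal (hbound z hz)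

theorem specRad_colCompanion_lt_one_iff (hm : 0 < m) (hb : ∀ j, 0 ≤ b j) :
    specRad (colCompanion m b) < 1 ↔ ∑ j ∈ range m, b j < 1 :=
  ⟨fun hρ => not_le.mp fun hs => hρ.not_ge (one_le_specRad_colCompanion hm hb hs),
    specRad_colCompanion_lt_one hm hb⟩

end Nonneg

noncomputable def coeffNormSum (m : ℕ) (μ : Fin m → ℂ) (n : ℕ) : ℝ :=
  ∑ j ∈ range m, ‖acoef m μ n (j + 1)‖

theorem absCompanion_mul_rateDiag (m : ℕ) (μ : Fin m → ℂ) (n : ℕ) (r : ℝ) :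
    absCompanion m μ n * rateDiag m n r =
      colCompanion m (fun j => ‖acoef m μ n (j + 1)‖ * (2 : ℝ) ^ (-((n : ℝ) * r))) := by
  have : absCompanion m μ n = colCompanion m (fun j => ‖acoef m μ n (j + 1)‖) := rfl
  rw [this, rateDiag, colCompanion_mul_diagonal]

theorem sInf_setOf_specRad_lt_one {m : ℕ} (μ : Fin m → ℂ) {n : ℕ} (hn : 0 < n)
    (hS : 0 < coeffNormSum m μ n) :
    sInf {r : ℝ | specRad (absCompanion m μ n * rateDiag m n r) < 1} =
      Real.logb 2 (coeffNormSum m μ n) / n := by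
  have hm : 0 < m := Nat.pos_of_ne_zero fun hm => by simp [coeffNormSum, hm] at hS
  suffices {r : ℝ | specRad (absCompanion m μ n * rateDiag m n r) < 1} =
      Set.Ioi (Real.logb 2 (coeffNormSum m μ n) / n) by rw [this, csInf_Ioi]
  ext r
  have ht : (0 : ℝ) < 2 ^ (-((n : ℝ) * r)) := by positivity
  rw [Set.mem_ofPred_eq, absCompanion_mul_rateDiag,
    specRad_colCompanion_lt_one_iff hm fun j => by positivity, ← sum_mul, ← coeffNormSum,
    ← Real.logb_neg_iff one_lt_two (by positivity), Real.logb_mul hS.ne' ht.ne',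
    Real.logb_rpow two_pos (by norm_num), Set.mem_Ioi, div_lt_iff₀ (by exact_mod_cast hn)]
  constructor <;> intro h <;> linarith

section ProdFilter

variable {ι : Type*} {f : ι → ℝ}

theorem prod_le_prod_filter_one_lt (hf : ∀ i, 0 ≤ f i) {s t : Finset ι} (hts : t ⊆ s) :
    ∏ i ∈ t, f i ≤ ∏ i ∈ s with 1 < f i, f i := by
  classical
  calc ∏ i ∈ t, f i = (∏ i ∈ t with 1 < f i, f i) * ∏ i ∈ t with ¬1 < f i, f i :=
        (prod_filter_mul_prod_filter_not t _ f).symm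
    _ ≤ (∏ i ∈ t with 1 < f i, f i) * 1 := by
        gcongr
        · exact prod_nonneg fun i _ => hf i
        · exact prod_le_one (fun i _ => hf i) fun i hi => not_lt.mp (mem_filter.mp hi).2
    _ ≤ ∏ i ∈ s with 1 < f i, f i := by
        rw [mul_one]
        exact prod_le_prod_of_subset_of_one_le (filter_subset_filter _ hts)
          (fun i _ => hf i) fun i hi _ => (mem_filter.mp hi).2.le

theorem prod_lt_prod_filter_one_lt [Fintype ι] [DecidableEq ι] (hf : ∀ i, 0 ≤ f i)
    {t : Finset ι} (ht : #t = #{i | 1 < f i}) (hne : t ≠ ({i | 1 < f i} : Finset ι)) :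
    ∏ i ∈ t, f i < ∏ i with 1 < f i, f i := by
  obtain ⟨x, hxB, hxt⟩ : ∃ x ∈ ({i | 1 < f i} : Finset ι), x ∉ t := by
    by_contra! h
    exact hne (eq_of_subset_of_card_le h ht.le).symm
  have hx : 1 < f x := (mem_filter.mp hxB).2
  have hrest : 1 ≤ ∏ i ∈ ({i | 1 < f i} : Finset ι).erase x, f i :=
    one_le_prod fun i hi => (mem_filter.mp (mem_of_mem_erase hi)).2.le
  calc ∏ i ∈ t, f i ≤ ∏ i ∈ univ.erase x with 1 < f i, f i :=
        prod_le_prod_filter_one_lt hf fun i hi => mem_erase.mpr ⟨fun h => hxt (h ▸ hi), mem_univ i⟩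
    _ = ∏ i ∈ ({i | 1 < f i} : Finset ι).erase x, f i := by rw [filter_erase]
    _ < f x * ∏ i ∈ ({i | 1 < f i} : Finset ι).erase x, f i :=
        lt_mul_of_one_lt_left (one_pos.trans_le hrest) hx
    _ = ∏ i with 1 < f i, f i := mul_prod_erase _ f hxB

end ProdFilter

theorem norm_prod_pow {ι : Type*} (f : ι → ℂ) (t : Finset ι) (n : ℕ) :
    ‖∏ l ∈ t, f l ^ n‖ = (∏ l ∈ t, ‖f l‖) ^ n := by
  rw [norm_prod, ← prod_pow]
  simp only [norm_pow]

section Coefficients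

variable {m : ℕ} (μ : Fin m → ℂ) (n : ℕ)

theorem acoef_eq_sum_powersetCard {j : ℕ} (hj : j ≤ m) :
    acoef m μ n j = (-1) ^ j * ∑ t ∈ powersetCard j univ, ∏ l ∈ t, μ l ^ n := by
  have h := Multiset.prod_X_sub_C_coeff (univ.val.map fun l => μ l ^ n) (k := m - j)
    (by simp)
  rw [Multiset.card_map, card_val, card_univ, Fintype.card_fin, Nat.sub_sub_self hj,
    esymm_map_val, Multiset.map_map] at h
  exact h

theorem norm_acoef_le {j : ℕ} (hj : j ≤ m) :
    ‖acoef m μ n j‖ ≤ m.choose j * (∏ i with 1 < ‖μ i‖, ‖μ i‖) ^ n := by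
  rw [acoef_eq_sum_powersetCard μ n hj, norm_mul, norm_pow, norm_neg, norm_one, one_pow, one_mul]
  calc ‖∑ t ∈ powersetCard j univ, ∏ l ∈ t, μ l ^ n‖
      ≤ ∑ t ∈ powersetCard j univ, (∏ i with 1 < ‖μ i‖, ‖μ i‖) ^ n := by
        refine (norm_sum_le _ _).trans (sum_le_sum fun t _ => ?_)
        rw [norm_prod_pow]
        exact pow_le_pow_left₀ (prod_nonneg fun i _ => norm_nonneg _)
          (prod_le_prod_filter_one_lt (fun i => norm_nonneg (μ i)) (subset_univ t)) n
    _ = m.choose j * (∏ i with 1 < ‖μ i‖, ‖μ i‖) ^ n := by simp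

theorem eventually_pow_div_two_le_norm_acoef :
    ∀ᶠ n in atTop, (∏ i with 1 < ‖μ i‖, ‖μ i‖) ^ n / 2 ≤ ‖acoef m μ n #{i | 1 < ‖μ i‖}‖ := by
  set B : Finset (Fin m) := {i | 1 < ‖μ i‖}
  set P := ∏ i ∈ B, ‖μ i‖
  have hP : 0 < P := prod_pos fun i hi => one_pos.trans (mem_filter.mp hi).2
  have hB : B ∈ powersetCard #B univ := mem_powersetCard.mpr ⟨subset_univ B, rfl⟩
  set T := (powersetCard #B univ).erase B
  have hratio : ∀ t ∈ T, (∏ l ∈ t, ‖μ l‖) / P < 1 := fun t ht => by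
    rw [div_lt_one hP]
    exact prod_lt_prod_filter_one_lt (fun i => norm_nonneg (μ i))
      (mem_powersetCard.mp (mem_of_mem_erase ht)).2 (ne_of_mem_erase ht)
  have hsmall : ∀ᶠ n in atTop, ∑ t ∈ T, ((∏ l ∈ t, ‖μ l‖) / P) ^ n ≤ 1 / 2 := by
    have : Tendsto (fun n => ∑ t ∈ T, ((∏ l ∈ t, ‖μ l‖) / P) ^ n) atTop (𝓝 0) := by
      simpa using tendsto_finsetSum T fun t ht => tendsto_pow_atTop_nhds_zero_of_lt_one
        (div_nonneg (prod_nonneg fun i _ => norm_nonneg _) hP.le) (hratio t ht)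
    exact this.eventually_le_const (by norm_num)
  filter_upwards [hsmall] with n hn
  have htail : ‖∑ t ∈ T, ∏ l ∈ t, μ l ^ n‖ ≤ P ^ n / 2 :=
    calc ‖∑ t ∈ T, ∏ l ∈ t, μ l ^ n‖ ≤ ∑ t ∈ T, (∏ l ∈ t, ‖μ l‖) ^ n :=
          (norm_sum_le _ _).trans_eq (sum_congr rfl fun t _ => norm_prod_pow μ t n)
      _ = P ^ n * ∑ t ∈ T, ((∏ l ∈ t, ‖μ l‖) / P) ^ n := by
          rw [mul_sum]
          exact sum_congr rfl fun t _ => by rw [div_pow, mul_div_cancel₀ _ (by positivity)]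
      _ ≤ P ^ n / 2 := by nlinarith [pow_pos hP n]
  rw [acoef_eq_sum_powersetCard μ n (card_finset_fin_le B), norm_mul, norm_pow, norm_neg, norm_one,
    one_pow, one_mul, ← add_sum_erase _ _ hB]
  have := norm_sub_norm_le (∏ l ∈ B, μ l ^ n) (-∑ t ∈ T, ∏ l ∈ t, μ l ^ n)
  rw [norm_neg, sub_neg_eq_add, norm_prod_pow] at this
  linarith

theorem norm_acoef_le_coeffNormSum {k : ℕ} (hk : 1 ≤ k) (hkm : k ≤ m) :
    ‖acoef m μ n k‖ ≤ coeffNormSum m μ n := by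
  have := single_le_sum (f := fun j => ‖acoef m μ n (j + 1)‖) (fun j _ => norm_nonneg _)
    (mem_range.mpr (show k - 1 < m by omega))
  rwa [Nat.sub_add_cancel hk] at this

theorem coeffNormSum_le :
    coeffNormSum m μ n ≤
      (∑ j ∈ range m, (m.choose (j + 1) : ℝ)) * (∏ i with 1 < ‖μ i‖, ‖μ i‖) ^ n := by
  rw [coeffNormSum, sum_mul]
  exact sum_le_sum fun j hj => norm_acoef_le μ n (mem_range.mp hj)

end Coefficients

theorem tendsto_logb_mul_pow_div_natCast (b : ℝ) {c P : ℝ} (hc : 0 < c) (hP : 0 < P) :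
    Tendsto (fun n : ℕ => Real.logb b (c * P ^ n) / n) atTop (𝓝 (Real.logb b P)) := by
  have hlim : Tendsto (fun n : ℕ => Real.logb b c / n + Real.logb b P) atTop
      (𝓝 (0 + Real.logb b P)) :=
    (tendsto_const_div_atTop_nhds_zero_nat _).add tendsto_const_nhds
  rw [zero_add] at hlim
  refine hlim.congr' ?_
  filter_upwards [eventually_ne_atTop 0] with n hn
  rw [Real.logb_mul hc.ne' (pow_pos hP n).ne', Real.logb_pow]
  field_simp

theorem tendsto_logb_div_natCast_of_le_of_le {b c₁ c₂ P : ℝ} {u : ℕ → ℝ} (hb : 1 < b)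
    (hc₁ : 0 < c₁) (hP : 0 < P) (hlow : ∀ᶠ n in atTop, c₁ * P ^ n ≤ u n)
    (hup : ∀ᶠ n in atTop, u n ≤ c₂ * P ^ n) :
    Tendsto (fun n : ℕ => Real.logb b (u n) / n) atTop (𝓝 (Real.logb b P)) := by
  have hc₂ : 0 < c₂ := by
    obtain ⟨n, hl, hu⟩ := (hlow.and hup).exists
    exact hc₁.trans_le (le_of_mul_le_mul_right (hl.trans hu) (pow_pos hP n))
  refine tendsto_of_tendsto_of_tendsto_of_le_of_le' (tendsto_logb_mul_pow_div_natCast b hc₁ hP)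
    (tendsto_logb_mul_pow_div_natCast b hc₂ hP) ?_ ?_
  · filter_upwards [hlow] with n hn
    gcongr
  · filter_upwards [hlow, hup] with n hl hu
    gcongr
    exact (by positivity : 0 < c₁ * P ^ n).trans_le hl

theorem feedback_rate_threshold_tendsto_general (m : ℕ) (μ : Fin m → ℂ)
    (hex : ∃ i, 1 < ‖μ i‖) :
    Filter.Tendsto
      (fun n : ℕ =>
        sInf {r : ℝ | specRad (absCompanion m μ n * rateDiag m n r) < 1})
      Filter.atTop
      (nhds (∑ i ∈ Finset.univ.filter fun i => 1 < ‖μ i‖,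
        Real.logb 2 ‖μ i‖)) := by
  obtain ⟨i₀, hi₀⟩ := hex
  have hB : 1 ≤ #{i | 1 < ‖μ i‖} := card_pos.mpr ⟨i₀, mem_filter.mpr ⟨mem_univ i₀, hi₀⟩⟩
  have hP : 0 < ∏ i with 1 < ‖μ i‖, ‖μ i‖ := prod_pos fun i hi => one_pos.trans (mem_filter.mp hi).2
  have hlow : ∀ᶠ n in atTop, 2⁻¹ * (∏ i with 1 < ‖μ i‖, ‖μ i‖) ^ n ≤ coeffNormSum m μ n := by
    filter_upwards [eventually_pow_div_two_le_norm_acoef μ] with n hn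
    linarith [norm_acoef_le_coeffNormSum μ n hB (card_finset_fin_le _)]
  rw [← Real.logb_prod _ _ fun i hi => (one_pos.trans (mem_filter.mp hi).2).ne']
  refine (tendsto_logb_div_natCast_of_le_of_le one_lt_two (by norm_num) hP hlow
    (Eventually.of_forall (coeffNormSum_le μ))).congr' ?_
  filter_upwards [hlow, eventually_gt_atTop 0] with n hn hn0
  exact (sInf_setOf_specRad_lt_one μ hn0 ((by positivity : (0 : ℝ) < _).trans_le hn)).symm

/-- With `R^f_n = inf{r : λ(F̄_n D(r)) < 1}`, one has
`R^f_n → Σ_{i:|μ_i|>1} log₂ |μ_i|` as `n → ∞`. -/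
theorem feedback_rate_threshold_tendsto (m : ℕ) (μ : Fin m → ℂ)
    (hμ0 : ∀ i, μ i ≠ 0) (hμ1 : ∀ i, ‖μ i‖ ≠ 1)
    (hex : ∃ i, 1 < ‖μ i‖) :
    Filter.Tendsto
      (fun n : ℕ =>
        sInf {r : ℝ | specRad (absCompanion m μ n * rateDiag m n r) < 1})
      Filter.atTop
      (nhds (∑ i ∈ Finset.univ.filter fun i => 1 < ‖μ i‖,
        Real.logb 2 ‖μ i‖)) :=
  feedback_rate_threshold_tendsto_general m μ hex
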